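/- arXiv:1608.02816 — 3 statements merged into one kernel-verified Lean document; each statement's English description precedes it below -/
import Mathlib

section
/- Let q be an odd prime, p ∈ {1,...,q−1}, l ∈ {1,...,q−1}, and k ∈ {1,...,q−1} satisfy cos(2πkp/q) = cos(2πl/q). Then cos(2πpl/q) − cos(2πpk/q) − cos(2πl/q) + cos(2πk/q) = 0 if and only if p ≡ ±1 (mod q). -/
open Real

lemma cos_nat_eq_iff {q : ℕ} (hq : 0 < q) (m n : ℕ) :
    Real.cos (2 * π * m / q) = Real.cos (2 * π * n / q) ↔
      ((m : ZMod q) = (n : ZMod q) ∨ (m : ZMod q) = -(n : ZMod q)) := by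
  haveI : NeZero q := ⟨hq.ne'⟩
  have hq0 : (q : ℝ) ≠ 0 := Nat.cast_ne_zero.mpr hq.ne'
  rw [Real.cos_eq_cos_iff]
  constructor
  · rintro ⟨t, ht | ht⟩
    · left
      have hn : (n : ℝ) = t * q + m := by
        field_simp at ht
        have h2 : (2 * π) * (n : ℝ) = (2 * π) * (t * q + m) := by linear_combination (2 * π) * ht
        have := mul_left_cancel₀ (by positivity : (2 * π : ℝ) ≠ 0) h2
        linarith
      have hz : (n : ℤ) = t * q + m := by exact_mod_cast hn
      have h3 : ((n : ℤ) : ZMod q) = ((t * q + m : ℤ) : ZMod q) := by rw [hz]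
      push_cast at h3
      simp [ZMod.natCast_self] at h3
      exact h3.symm
    · right
      have hn : (n : ℝ) = t * q - m := by
        field_simp at ht
        have h2 : (2 * π) * (n : ℝ) = (2 * π) * (t * q - m) := by linear_combination (2 * π) * ht
        have := mul_left_cancel₀ (by positivity : (2 * π : ℝ) ≠ 0) h2
        linarith
      have hz : (n : ℤ) = t * q - m := by exact_mod_cast hn
      have h3 : ((n : ℤ) : ZMod q) = ((t * q - m : ℤ) : ZMod q) := by rw [hz]
      push_cast at h3
      simp [ZMod.natCast_self] at h3
      linear_combination h3
  · rintro (h | h)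
    · rw [ZMod.natCast_eq_natCast_iff] at h
      obtain ⟨t, ht⟩ := (Nat.modEq_iff_dvd.mp h)
      refine ⟨t, Or.inl ?_⟩
      have hn : (n : ℝ) = m + q * t := by
        have : (n : ℤ) = m + q * t := by linarith [ht]
        exact_mod_cast this
      field_simp [hn]
      linarith [hn]
    · have h0 : ((m + n : ℕ) : ZMod q) = 0 := by push_cast; rw [h]; ring
      rw [ZMod.natCast_eq_zero_iff] at h0
      obtain ⟨t, ht⟩ := h0
      refine ⟨(t : ℤ), Or.inr ?_⟩
      have hn : (n : ℝ) = q * t - m := by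
        have : (m : ℕ) + n = q * t := ht
        have h2 : (m : ℝ) + n = q * t := by exact_mod_cast this
        linarith
      field_simp [hn]
      push_cast; linarith [hn]
open Real Polynomial

lemma key_indep {q a b c : ℕ} (hq : q.Prime) (hodd : Odd q)
    (ha : 1 ≤ a ∧ a ≤ q - 1) (hb : 1 ≤ b ∧ b ≤ q - 1) (hc : 1 ≤ c ∧ c ≤ q - 1)
    (h : Real.cos (2 * π * a / q) - 2 * Real.cos (2 * π * b / q)
          + Real.cos (2 * π * c / q) = 0) :
    b = c ∨ b + c = q := by
  haveI : Fact q.Prime := ⟨hq⟩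
  have hq0 : 0 < q := hq.pos
  have hqR : (q : ℂ) ≠ 0 := Nat.cast_ne_zero.mpr hq0.ne'
  -- basic range facts
  have hrange : ∀ x : ℕ, 1 ≤ x → x ≤ q - 1 → x < q ∧ 1 ≤ q - x ∧ q - x ≤ q - 1 ∧ q - x ≠ x := by
    intro x h1 h2
    have hxq : x < q := lt_of_le_of_lt h2 (Nat.sub_lt hq0 one_pos)
    refine ⟨hxq, ?_, ?_, ?_⟩
    · omega
    · omega
    · intro hx
      have : q = 2 * x := by omega
      exact (Nat.not_even_iff_odd.mpr hodd) ⟨x, by omega⟩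
  obtain ⟨haq, ha1, ha2, hane⟩ := hrange a ha.1 ha.2
  obtain ⟨hbq, hb1, hb2, hbne⟩ := hrange b hb.1 hb.2
  obtain ⟨hcq, hc1, hc2, hcne⟩ := hrange c hc.1 hc.2
  -- the primitive root
  set ζ : ℂ := Complex.exp (2 * π * Complex.I / q) with hζdef
  have hζ : IsPrimitiveRoot ζ q := Complex.isPrimitiveRoot_exp q hq0.ne'
  -- pair identity
  have pair : ∀ x : ℕ, x ≤ q →
      ζ ^ x + ζ ^ (q - x) = ((2 * Real.cos (2 * π * x / q) : ℝ) : ℂ) := by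
    intro x hxq
    have e1 : ζ ^ x = Complex.exp (((2 * π * x / q : ℝ) : ℂ) * Complex.I) := by
      rw [hζdef, ← Complex.exp_nat_mul]
      congr 1
      push_cast
      ring
    have e2 : ζ ^ (q - x) = Complex.exp (-(((2 * π * x / q : ℝ) : ℂ) * Complex.I)) := by
      rw [hζdef, ← Complex.exp_nat_mul]
      have hcast : ((q - x : ℕ) : ℂ) = (q : ℂ) - x := by
        push_cast [Nat.cast_sub hxq]; ring
      rw [hcast]
      have : ((q : ℂ) - x) * (2 * π * Complex.I / q)
          = 2 * π * Complex.I + -(((2 * π * x / q : ℝ) : ℂ) * Complex.I) := by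
        push_cast
        field_simp
        ring
      rw [this, Complex.exp_add, Complex.exp_two_pi_mul_I, one_mul]
    rw [e1, e2]
    have := Complex.two_cos (x := ((2 * π * x / q : ℝ) : ℂ))
    rw [neg_mul] at this
    rw [← this, ← Complex.ofReal_cos]
    push_cast
    ring
  -- the polynomial
  set P : Polynomial ℚ := X ^ a + X ^ (q - a) - C 2 * X ^ b - C 2 * X ^ (q - b)
      + X ^ c + X ^ (q - c) with hPdef
  have haP : Polynomial.aeval ζ P = 0 := by
    have expand : Polynomial.aeval ζ P
        = (ζ ^ a + ζ ^ (q - a)) - 2 * (ζ ^ b + ζ ^ (q - b)) + (ζ ^ c + ζ ^ (q - c)) := by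
      simp only [hPdef, map_add, map_sub, map_mul, map_pow, Polynomial.aeval_X,
        Polynomial.aeval_C, map_ofNat]
      ring
    rw [expand, pair a haq.le, pair b hbq.le, pair c hcq.le]
    have : ((2 * Real.cos (2 * π * a / q) : ℝ) : ℂ)
        - 2 * ((2 * Real.cos (2 * π * b / q) : ℝ) : ℂ)
        + ((2 * Real.cos (2 * π * c / q) : ℝ) : ℂ)
        = ((2 * (Real.cos (2 * π * a / q) - 2 * Real.cos (2 * π * b / q)
            + Real.cos (2 * π * c / q)) : ℝ) : ℂ) := by
      push_cast
      ring
    rw [this, h]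
    norm_num
  -- minpoly divides
  have hdvd : Polynomial.cyclotomic q ℚ ∣ P := by
    rw [Polynomial.cyclotomic_eq_minpoly_rat hζ hq0]
    exact minpoly.dvd ℚ ζ haP
  -- P = 0
  have hdegP : P.natDegree ≤ q - 1 := by
    have hxp : ∀ e : ℕ, e ≤ q - 1 → (X ^ e : Polynomial ℚ).natDegree ≤ q - 1 := by
      intro e he
      simp [Polynomial.natDegree_X_pow, he]
    have hcxp : ∀ e : ℕ, e ≤ q - 1 → (C (2:ℚ) * X ^ e).natDegree ≤ q - 1 := by
      intro e he
      exact le_trans (Polynomial.natDegree_C_mul_le _ _) (hxp e he)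
    rw [hPdef]
    refine le_trans (Polynomial.natDegree_add_le _ _) (max_le ?_ (hxp _ hc2))
    refine le_trans (Polynomial.natDegree_add_le _ _) (max_le ?_ (hxp _ hc.2))
    refine le_trans (Polynomial.natDegree_sub_le _ _) (max_le ?_ (hcxp _ hb2))
    refine le_trans (Polynomial.natDegree_sub_le _ _) (max_le ?_ (hcxp _ hb.2))
    exact le_trans (Polynomial.natDegree_add_le _ _) (max_le (hxp _ ha.2) (hxp _ ha2))
  have hP0 : P = 0 := by
    by_contra h0
    obtain ⟨R, hR⟩ := hdvd
    have hcyc0 : Polynomial.cyclotomic q ℚ ≠ 0 := Polynomial.cyclotomic_ne_zero q ℚ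
    have hR0 : R ≠ 0 := by
      intro hR0
      rw [hR0, mul_zero] at hR
      exact h0 hR
    have hdegcyc : (Polynomial.cyclotomic q ℚ).natDegree = q - 1 := by
      rw [Polynomial.natDegree_cyclotomic, Nat.totient_prime hq]
    have hdegmul : P.natDegree = q - 1 + R.natDegree := by
      rw [hR, Polynomial.natDegree_mul hcyc0 hR0, hdegcyc]
    have hRdeg : R.natDegree = 0 := by omega
    have hRC : R = C (R.coeff 0) := Polynomial.eq_C_of_natDegree_eq_zero hRdeg
    have heval : P.eval 1 = 0 := by
      simp [hPdef]
      ring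
    rw [hR, Polynomial.eval_mul, Polynomial.eval_one_cyclotomic_prime, hRC] at heval
    simp at heval
    rcases heval with h' | h'
    · exact hq0.ne' (by exact_mod_cast h')
    · rw [hRC, h', map_zero, mul_zero] at hR
      exact h0 hR
  -- extract coefficient at b
  have hcoeff : P.coeff b = 0 := by rw [hP0]; simp
  simp only [hPdef, Polynomial.coeff_add, Polynomial.coeff_sub, Polynomial.coeff_C_mul,
    Polynomial.coeff_X_pow] at hcoeff
  rw [if_pos trivial, if_neg (show ¬ b = q - b from fun hh => hbne hh.symm)] at hcoeff
  by_cases h1 : b = c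
  · left; omega
  by_cases h2 : b = q - c
  · right; omega
  rw [if_neg h1, if_neg h2] at hcoeff
  exfalso
  by_cases h3 : b = a <;> by_cases h4 : b = q - a
  · exact hane (by omega)
  · rw [if_pos h3, if_neg h4] at hcoeff; norm_num at hcoeff
  · rw [if_neg h3, if_pos h4] at hcoeff; norm_num at hcoeff
  · rw [if_neg h3, if_neg h4] at hcoeff; norm_num at hcoeff

/-- Lemma (number theory): for `q` an odd prime and `p, l, k ∈ {1,…,q−1}` with
`cos(2πkp/q) = cos(2πl/q)`, the relation
`cos(2πpl/q) − cos(2πpk/q) − cos(2πl/q) + cos(2πk/q) = 0` holds iff `p ≡ ±1 (mod q)`. -/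
theorem cos_relation_iff_p_eq_pm_one
    (q p l k : ℕ) (hq : q.Prime) (hodd : Odd q)
    (hp : 1 ≤ p ∧ p ≤ q - 1) (hl : 1 ≤ l ∧ l ≤ q - 1) (hk : 1 ≤ k ∧ k ≤ q - 1)
    (hcos : Real.cos (2 * π * k * p / q) = Real.cos (2 * π * l / q)) :
    (Real.cos (2 * π * p * l / q) - Real.cos (2 * π * p * k / q)
      - Real.cos (2 * π * l / q) + Real.cos (2 * π * k / q) = 0)
    ↔ ((p : ZMod q) = 1 ∨ (p : ZMod q) = -1) := by
  haveI : Fact q.Prime := ⟨hq⟩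
  have hq0 : 0 < q := hq.pos
  have hp0 : (p : ZMod q) ≠ 0 := by
    rw [Ne, ZMod.natCast_eq_zero_iff]
    intro hdvd
    have := Nat.le_of_dvd (by omega) hdvd
    omega
  have hk0 : (k : ZMod q) ≠ 0 := by
    rw [Ne, ZMod.natCast_eq_zero_iff]
    intro hdvd
    have := Nat.le_of_dvd (by omega) hdvd
    omega
  have hcos' : Real.cos (2 * π * (k * p : ℕ) / q) = Real.cos (2 * π * l / q) := by
    have harg : (2 * π * ((k * p : ℕ) : ℝ) / q) = 2 * π * k * p / q := by push_cast; ring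
    rw [harg]; exact hcos
  have hkp : ((k * p : ℕ) : ZMod q) = (l : ZMod q)
      ∨ ((k * p : ℕ) : ZMod q) = -(l : ZMod q) := (cos_nat_eq_iff hq0 _ _).mp hcos'
  push_cast at hkp
  constructor
  · intro hrel
    set A := (p * p * k) % q with hAdef
    set B := (p * k) % q with hBdef
    have hAz : ((A : ℕ) : ZMod q) = ((p : ZMod q) * p * k) := by
      rw [hAdef, ZMod.natCast_mod]; push_cast; ring
    have hBz : ((B : ℕ) : ZMod q) = ((p : ZMod q) * k) := by
      rw [hBdef, ZMod.natCast_mod]; push_cast; ring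
    have hA1 : 1 ≤ A ∧ A ≤ q - 1 := by
      have hlt : A < q := Nat.mod_lt _ hq0
      have hne : A ≠ 0 := by
        intro h0
        have : ((A : ℕ) : ZMod q) = 0 := by rw [h0]; simp
        rw [hAz] at this
        exact (mul_ne_zero (mul_ne_zero hp0 hp0) hk0) this
      omega
    have hB1 : 1 ≤ B ∧ B ≤ q - 1 := by
      have hlt : B < q := Nat.mod_lt _ hq0
      have hne : B ≠ 0 := by
        intro h0
        have : ((B : ℕ) : ZMod q) = 0 := by rw [h0]; simp
        rw [hBz] at this
        exact (mul_ne_zero hp0 hk0) this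
      omega
    -- rewrite the four cosines
    have c1 : Real.cos (2 * π * p * l / q) = Real.cos (2 * π * A / q) := by
      have harg : (2 * π * (p : ℝ) * l / q) = 2 * π * ((p * l : ℕ) : ℝ) / q := by
        push_cast; ring
      rw [harg]
      refine (cos_nat_eq_iff hq0 (p * l) A).mpr ?_
      rcases hkp with h | h
      · left
        rw [hAz]; push_cast
        linear_combination -(p : ZMod q) * h
      · right
        rw [hAz]; push_cast
        linear_combination (p : ZMod q) * h
    have c2 : Real.cos (2 * π * p * k / q) = Real.cos (2 * π * B / q) := by
      have harg : (2 * π * (p : ℝ) * k / q) = 2 * π * ((p * k : ℕ) : ℝ) / q := by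
        push_cast; ring
      rw [harg]
      refine (cos_nat_eq_iff hq0 (p * k) B).mpr (Or.inl ?_)
      rw [hBz]; push_cast; ring
    have c3 : Real.cos (2 * π * l / q) = Real.cos (2 * π * B / q) := by
      refine (cos_nat_eq_iff hq0 l B).mpr ?_
      rcases hkp with h | h
      · left
        rw [hBz]
        linear_combination -h
      · right
        rw [hBz]
        linear_combination h
    rw [c1, c2, c3] at hrel
    have hkey := key_indep hq hodd hA1 hB1 hk (by linear_combination hrel)
    rcases hkey with hBk | hBk
    · left
      have : ((B : ℕ) : ZMod q) = (k : ZMod q) := by rw [hBk]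
      rw [hBz] at this
      have h1 : (p : ZMod q) * k = 1 * k := by rw [this]; ring
      exact mul_right_cancel₀ hk0 h1
    · right
      have : ((B : ℕ) : ZMod q) = -(k : ZMod q) := by
        have h0 : ((B + k : ℕ) : ZMod q) = 0 := by rw [hBk]; simp
        push_cast at h0
        linear_combination h0
      rw [hBz] at this
      have h1 : (p : ZMod q) * k = (-1) * k := by rw [this]; ring
      exact mul_right_cancel₀ hk0 h1
  · intro h1
    have e1 : Real.cos (2 * π * p * l / q) = Real.cos (2 * π * l / q) := by
      have harg : (2 * π * (p : ℝ) * l / q) = 2 * π * ((p * l : ℕ) : ℝ) / q := by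
        push_cast; ring
      rw [harg]
      refine (cos_nat_eq_iff hq0 (p * l) l).mpr ?_
      rcases h1 with h | h
      · left; push_cast; rw [h, one_mul]
      · right; push_cast; rw [h]; ring
    have e2 : Real.cos (2 * π * p * k / q) = Real.cos (2 * π * k / q) := by
      have harg : (2 * π * (p : ℝ) * k / q) = 2 * π * ((p * k : ℕ) : ℝ) / q := by
        push_cast; ring
      rw [harg]
      refine (cos_nat_eq_iff hq0 (p * k) k).mpr ?_
      rcases h1 with h | h
      · left; push_cast; rw [h, one_mul]
      · right; push_cast; rw [h]; ring
    rw [e1, e2]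
    ring
end

section
/- Fix q ≥ 3 and l ∈ {1,...,q−1}, and let p₁,...,p_n be integers coprime to q. For each i let k_i be the unique residue mod q with p_i k_i ≡ l (mod q), and define p_i ∼ p_j iff cos(2π p_i k_j / q) = cos(2πl/q). Then ∼ is an equivalence relation on {p₁,...,p_n}. -/
/-! With `u i` the unit `p i` of `ZMod q`, the congruence `p j * k j ≡ l` gives `k j = (u j)⁻¹ * l`,
and `cos (2π a / q) = cos (2π b / q)` exactly when `a ≡ ± b (mod q)`. So `i ∼ j` says
`u i * (u j)⁻¹ * l = ± l`: the units `u` with `u * l = ± l` form a subgroup of `(ZMod q)ˣ`, and `∼` is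
the relation of lying in the same coset of it. -/

open Real

theorem cos_two_pi_mul_div_eq_cos_iff {q : ℕ} (hq : q ≠ 0) (a b : ℤ) :
    cos (2 * π * a / q) = cos (2 * π * b / q) ↔ (a : ZMod q) = b ∨ (a : ZMod q) = -b := by
  have shift (c m : ℤ) : 2 * π * b / q = 2 * m * π + 2 * π * c / q ↔ b - c = q * m := by
    rw [← Int.cast_inj (α := ℝ)]
    push_cast
    rw [div_eq_iff (by positivity), add_mul, div_mul_cancel₀ _ (by positivity)]
    constructor <;> intro h <;> nlinarith [pi_pos]
  have hneg : (a : ZMod q) = -b ↔ (q : ℤ) ∣ b - -a := by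
    rw [← ZMod.intCast_eq_intCast_iff_dvd_sub, Int.cast_neg, neg_eq_iff_eq_neg]
  rw [cos_eq_cos_iff, ZMod.intCast_eq_intCast_iff_dvd_sub, hneg, dvd_def, dvd_def, ← exists_or]
  refine exists_congr fun m => or_congr (shift a m) ?_
  rw [sub_eq_add_neg (2 * (m : ℝ) * π), ← neg_div, ← mul_neg, ← Int.cast_neg, shift]

def Units.signStabilizer {M : Type*} [Monoid M] [HasDistribNeg M] (x : M) : Subgroup Mˣ where
  carrier := {u | (u : M) * x = x ∨ (u : M) * x = -x}
  one_mem' := Or.inl (one_mul x)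
  mul_mem' := by
    rintro u v (hu | hu) (hv | hv) <;> simp [mul_assoc, hu, hv]
  inv_mem' := by
    rintro u (hu | hu)
    · exact Or.inl (by rw [Units.inv_mul_eq_iff_eq_mul, hu])
    · exact Or.inr (by rw [Units.inv_mul_eq_iff_eq_mul, mul_neg, hu, neg_neg])

theorem Units.mem_signStabilizer {M : Type*} [Monoid M] [HasDistribNeg M] {x : M} {u : Mˣ} :
    u ∈ signStabilizer x ↔ (u : M) * x = x ∨ (u : M) * x = -x := Iff.rfl

theorem Subgroup.equivalence_mul_inv_mem {G ι : Type*} [Group G] (H : Subgroup G) (f : ι → G) :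
    Equivalence fun i j => f i * (f j)⁻¹ ∈ H where
  refl i := by simp [H.one_mem]
  symm h := by simpa using H.inv_mem h
  trans h₁ h₂ := by simpa [mul_assoc] using H.mul_mem h₁ h₂

theorem sim_l_is_equivalence_general
    (n q l : ℕ) (hq : 3 ≤ q)
    (p k : Fin n → ℕ)
    (hcop : ∀ i, Nat.Coprime (p i) q)
    (hk : ∀ i, p i * k i ≡ l [MOD q]) :
    Equivalence (fun i j : Fin n =>
      Real.cos (2 * π * (p i * k j) / q) = Real.cos (2 * π * l / q)) := by
  set u : Fin n → (ZMod q)ˣ := fun i => ZMod.unitOfCoprime (p i) (hcop i)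
  have hk_eq (j : Fin n) : (k j : ZMod q) = ↑(u j)⁻¹ * l := by
    rw [Units.eq_inv_mul_iff_mul_eq, ZMod.coe_unitOfCoprime, ← Nat.cast_mul,
      (ZMod.natCast_eq_natCast_iff _ _ _).mpr (hk j)]
  have hsim (i j : Fin n) : cos (2 * π * (p i * k j) / q) = cos (2 * π * l / q) ↔
      u i * (u j)⁻¹ ∈ Units.signStabilizer (l : ZMod q) := by
    have := cos_two_pi_mul_div_eq_cos_iff (by omega : q ≠ 0) (p i * k j : ℕ) l
    push_cast at this
    rw [this, Units.mem_signStabilizer, hk_eq, Units.val_mul, mul_assoc, ZMod.coe_unitOfCoprime]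
  simpa only [hsim] using (Units.signStabilizer (l : ZMod q)).equivalence_mul_inv_mem u

/-- The relation `p_i ∼^{(l)} p_j` (given by `cos(2π p_i k_j/q) = cos(2πl/q)`,
where `p_i k_i ≡ l (mod q)`) is an equivalence relation. -/
theorem sim_l_is_equivalence
    (n q l : ℕ) (hq : 3 ≤ q) (hl : 1 ≤ l ∧ l ≤ q - 1)
    (p k : Fin n → ℕ)
    (hcop : ∀ i, Nat.Coprime (p i) q)
    (hk : ∀ i, p i * k i ≡ l [MOD q]) :
    Equivalence (fun i j : Fin n =>
      Real.cos (2 * π * (p i * k j) / q) = Real.cos (2 * π * l / q)) :=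
  sim_l_is_equivalence_general n q l hq p k hcop hk
end

section
/- Let q be an odd prime, p coprime to q, l ∈ {1,...,q−1}, and let k be the residue in {1,...,q−1} with pk ≡ l (mod q). If cos(2π l p/q) > cos(2πl/q) and cos(2πl/q) > cos(2πk/q) (so the two corresponding zeroth wave-invariant terms have Morse indices differing by 2 mod 4), then cos(2πlp/q) − cos(2πkp/q) ≠ cos(2πl/q) − cos(2πk/q) unless p ≡ ±1 (mod q). -/
/-!
Write `ψ` for the standard additive character of `ZMod q`, so that `2 cos (2πn/q) = ψ n + ψ (-n)`.
Since `kp ≡ l`, the hypothesis becomes `ψ(lp) + ψ(-lp) + ψ(k) + ψ(-k) = 2ψ(l) + 2ψ(-l)`.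
For `q` prime the minimal polynomial of a primitive `q`-th root of unity is `1 + X + ⋯ + X^(q-1)`,
so a rational relation among the values of `ψ` has constant coefficients, and vanishes if the
coefficients sum to `0`. Hence `l ∈ {±lp, ±k}`, and each of these forces `p ≡ ±1`.
-/

open Real

open Polynomial in
theorem AddChar.eq_of_sum_mul_eq_zero {q : ℕ} [Fact q.Prime] {K : Type*} [Field K] [CharZero K]
    (ψ : AddChar (ZMod q) K) (hψ : ψ 1 ≠ 1) (f : ZMod q → ℚ) (h : ∑ x, (f x : K) * ψ x = 0)
    (x y : ZMod q) : f x = f y := by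
  have hψpow : ∀ x : ZMod q, ψ x = ψ 1 ^ x.val := fun x => by
    rw [← ψ.map_nsmul_eq_pow, nsmul_one, ZMod.natCast_zmod_val]
  have hprim : IsPrimitiveRoot (ψ 1) q := IsPrimitiveRoot.iff_orderOf.2 <| orderOf_eq_prime
    (by rw [← ψ.map_nsmul_eq_pow, nsmul_one, ZMod.natCast_self, ψ.map_zero_eq_one]) hψ
  set g : ℚ[X] := ∑ x, C (f x) * X ^ x.val
  have hcoeff : ∀ y : ZMod q, g.coeff y.val = f y := fun y => by
    simp only [g, finsetSum_coeff, coeff_C_mul_X_pow]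
    rw [Finset.sum_eq_single y (fun x _ hxy => if_neg fun h => hxy (ZMod.val_injective q h.symm))
      (by simp), if_pos rfl]
  have hdvd : cyclotomic q ℚ ∣ g := by
    rw [cyclotomic_eq_minpoly_rat hprim (Fact.out : q.Prime).pos]
    refine minpoly.dvd ℚ _ ?_
    simpa [g, map_sum, ← hψpow] using h
  have hdeg : g.natDegree ≤ (cyclotomic q ℚ).natDegree := by
    rw [natDegree_cyclotomic, Nat.totient_prime Fact.out]
    refine natDegree_sum_le_of_forall_le _ _ fun x _ => (natDegree_C_mul_X_pow_le _ _).trans ?_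
    have := x.val_lt; omega
  obtain ⟨c, hc⟩ : ∃ c, g = C c * cyclotomic q ℚ :=
    ⟨_, eq_leadingCoeff_mul_of_monic_of_dvd_of_natDegree_le (cyclotomic.monic q ℚ) hdvd hdeg⟩
  have hconst : ∀ y : ZMod q, f y = c := fun y => by
    rw [← hcoeff, hc, coeff_C_mul, cyclotomic_prime, finsetSum_coeff]
    simp [coeff_X_pow, y.val_lt]
  rw [hconst x, hconst y]

namespace ZMod

variable {q : ℕ}

theorem eq_zero_of_sum_mul_stdAddChar_eq_zero [Fact q.Prime] (f : ZMod q → ℚ)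
    (hf : ∑ x, f x = 0) (h : ∑ x, (f x : ℂ) * stdAddChar x = 0) : f = 0 := by
  have hψ : stdAddChar (1 : ZMod q) ≠ 1 := by
    rw [← (stdAddChar (N := q)).map_zero_eq_one]
    exact injective_stdAddChar.ne one_ne_zero
  funext x
  have hconst : ∀ y, f y = f x := fun y => stdAddChar.eq_of_sum_mul_eq_zero hψ f h y x
  simp only [hconst, Finset.sum_const, Finset.card_univ, ZMod.card, nsmul_eq_mul] at hf
  exact (mul_eq_zero.1 hf).resolve_left (Nat.cast_ne_zero.2 (Fact.out : q.Prime).ne_zero)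

theorem two_mul_cos_eq_stdAddChar_add [NeZero q] (n : ℕ) :
    ((2 * Real.cos (2 * π * n / q) : ℝ) : ℂ) = stdAddChar (n : ZMod q) + stdAddChar (-n : ZMod q) := by
  have h₁ := stdAddChar_coe (N := q) n
  have h₂ := stdAddChar_coe (N := q) (-n)
  push_cast at h₁ h₂ ⊢
  rw [h₁, h₂, Complex.two_cos]
  ring_nf

theorem eq_or_eq_neg_of_stdAddChar_add_eq [Fact q.Prime] {a b c : ZMod q}
    (h : stdAddChar a + stdAddChar (-a) + (stdAddChar b + stdAddChar (-b))
      = 2 * (stdAddChar c + stdAddChar (-c))) :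
    c = a ∨ c = -a ∨ c = b ∨ c = -b := by
  by_contra! hc
  obtain ⟨hca, hcna, hcb, hcnb⟩ := hc
  set f : ZMod q → ℚ := fun x => (if x = a then 1 else 0) + (if x = -a then 1 else 0)
    + (if x = b then 1 else 0) + (if x = -b then 1 else 0)
    - 2 * (if x = c then 1 else 0) - 2 * (if x = -c then 1 else 0)
  have hfc : f c ≠ 0 := by
    simp only [f, hca, hcna, hcb, hcnb, if_true, if_false]
    split_ifs <;> norm_num
  refine hfc (congrFun (eq_zero_of_sum_mul_stdAddChar_eq_zero f ?_ ?_) c)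
  · norm_num [f, Finset.sum_add_distrib, Finset.sum_sub_distrib]
  · simp only [f, Rat.cast_sub, Rat.cast_add, Rat.cast_mul, apply_ite (Rat.cast (K := ℂ)),
      Rat.cast_one, Rat.cast_zero, Rat.cast_ofNat, sub_mul, add_mul, mul_assoc, ite_mul, one_mul,
      zero_mul, Finset.sum_sub_distrib, Finset.sum_add_distrib, ← Finset.mul_sum, Finset.sum_ite_eq',
      Finset.mem_univ, if_true]
    linear_combination h

end ZMod

theorem no_cancellation_three_dim_general
    (q p l k : ℕ) (hq : q.Prime)
    (hl : 1 ≤ l ∧ l ≤ q - 1)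
    (hpk : p * k ≡ l [MOD q])
    (heq : Real.cos (2 * π * l * p / q) - Real.cos (2 * π * k * p / q)
      = Real.cos (2 * π * l / q) - Real.cos (2 * π * k / q)) :
    (p : ZMod q) = 1 ∨ (p : ZMod q) = -1 := by
  have := Fact.mk hq
  have hKP : (k * p : ZMod q) = l := by
    rw [mul_comm]; exact_mod_cast (ZMod.natCast_eq_natCast_iff _ _ _).2 hpk
  have hψ : ZMod.stdAddChar (l * p : ZMod q) + ZMod.stdAddChar (-(l * p : ZMod q))
      + (ZMod.stdAddChar (k : ZMod q) + ZMod.stdAddChar (-k : ZMod q))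
      = 2 * (ZMod.stdAddChar (l : ZMod q) + ZMod.stdAddChar (-l : ZMod q)) := by
    have h := congrArg (fun x : ℝ => ((2 * x : ℝ) : ℂ)) heq
    simp only [mul_sub, Complex.ofReal_sub, mul_assoc _ _ (p : ℝ), ← Nat.cast_mul,
      ZMod.two_mul_cos_eq_stdAddChar_add] at h
    push_cast [hKP] at h
    linear_combination h
  have hL : (l : ZMod q) ≠ 0 := by
    rw [Ne, ZMod.natCast_eq_zero_iff]
    exact Nat.not_dvd_of_pos_of_lt hl.1 (by omega)
  rcases ZMod.eq_or_eq_neg_of_stdAddChar_add_eq hψ with h | h | h | h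
  · exact .inl <| mul_left_cancel₀ hL (by linear_combination -h)
  · exact .inr <| mul_left_cancel₀ hL (by linear_combination h)
  · exact .inl <| mul_left_cancel₀ hL (by linear_combination (p : ZMod q) * h + hKP)
  · exact .inr <| mul_left_cancel₀ hL (by linear_combination (p : ZMod q) * h - hKP)

/-- Cancellation analysis for 3-dimensional lens spaces: with `q` an odd prime,
`p` coprime to `q`, `pk ≡ l (mod q)`, and the sign conditions
`cos(2πlp/q) > cos(2πl/q) > cos(2πk/q)`, the equality
`cos(2πlp/q) − cos(2πkp/q) = cos(2πl/q) − cos(2πk/q)` forces `p ≡ ±1 (mod q)`. -/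
theorem no_cancellation_three_dim
    (q p l k : ℕ) (hq : q.Prime) (hodd : Odd q)
    (hp : Nat.Coprime p q) (hl : 1 ≤ l ∧ l ≤ q - 1) (hk : 1 ≤ k ∧ k ≤ q - 1)
    (hpk : p * k ≡ l [MOD q])
    (h1 : Real.cos (2 * π * l * p / q) > Real.cos (2 * π * l / q))
    (h2 : Real.cos (2 * π * l / q) > Real.cos (2 * π * k / q))
    (heq : Real.cos (2 * π * l * p / q) - Real.cos (2 * π * k * p / q)
      = Real.cos (2 * π * l / q) - Real.cos (2 * π * k / q)) :
    (p : ZMod q) = 1 ∨ (p : ZMod q) = -1 :=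
  no_cancellation_three_dim_general q p l k hq hl hpk heq
end
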